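/- Every L-algebra 𝒜 of complex type on an infinite-dimensional real Banach space X is contained in the algebra 𝒜_S, for some closed partial complex structure S on X. -/

import Mathlib

open Filter Topology

noncomputable section

variable {X : Type*} [NormedAddCommGroup X] [NormedSpace ℝ X]

/-- A bounded operator is of finite rank if its range is finite-dimensional. -/
def FiniteRank (T : X →L[ℝ] X) : Prop :=
  FiniteDimensional ℝ (LinearMap.range (T : X →ₗ[ℝ] X))

/-- Transitivity: every orbit of a nonzero vector is dense. -/
def IsTransitiveAlg (A : Set (X →L[ℝ] X)) : Prop :=
  ∀ x : X, x ≠ 0 → ∀ y : X, ∀ ε > 0, ∃ T ∈ A, ‖T x - y‖ < ε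

/-- A set of operators is an "L-set" if it is transitive and contains
a nonzero finite-rank operator. -/
def IsLSet (A : Set (X →L[ℝ] X)) : Prop :=
  IsTransitiveAlg A ∧ ∃ T ∈ A, T ≠ 0 ∧ FiniteRank T

/-- `A^F`: the finite-rank elements of `A`. -/
def AF (A : Set (X →L[ℝ] X)) : Set (X →L[ℝ] X) :=
  {T | T ∈ A ∧ FiniteRank T}

/-- `X^F = span {T x : T ∈ A^F, x ∈ X}`. -/
def XF (A : Set (X →L[ℝ] X)) : Submodule ℝ X :=
  Submodule.span ℝ {y | ∃ T ∈ AF A, ∃ x : X, T x = y}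

lemma mapsto_XF {A : Set (X →L[ℝ] X)} {T : X →L[ℝ] X} (hT : T ∈ AF A) :
    ∀ x ∈ XF A, (T : X →ₗ[ℝ] X) x ∈ XF A :=
  fun x _ => Submodule.subset_span ⟨T, hT, x, rfl⟩

/-- `𝔻`: the algebra of all `ℝ`-linear endomorphisms of `X^F` commuting with the
restriction to `X^F` of every operator in `A^F`. -/
def DD (A : Set (X →L[ℝ] X)) : Subalgebra ℝ (Module.End ℝ (XF A)) :=
  Subalgebra.centralizer ℝ
    {S | ∃ T : X →L[ℝ] X, ∃ hT : T ∈ AF A, S = (T : X →ₗ[ℝ] X).restrict (mapsto_XF hT)}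

def RealType (A : Set (X →L[ℝ] X)) : Prop := Nonempty (DD A ≃ₐ[ℝ] ℝ)
def ComplexType (A : Set (X →L[ℝ] X)) : Prop := Nonempty (DD A ≃ₐ[ℝ] ℂ)
def QuaternionType (A : Set (X →L[ℝ] X)) : Prop := Nonempty (DD A ≃ₐ[ℝ] Quaternion ℝ)

/-- `A` is dense: on any finite linearly independent family, elements of `A`
approximate arbitrary prescribed values. -/
def IsDenseAlg (A : Set (X →L[ℝ] X)) : Prop :=
  ∀ ε > 0, ∀ n : ℕ, ∀ x : Fin n → X, LinearIndependent ℝ x →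
    ∀ y : Fin n → X, ∃ T ∈ A, ∀ i, ‖T (x i) - y i‖ < ε

/-- `A` is `(1/k)`-dense. -/
def IsFracDense (k : ℕ) (A : Set (X →L[ℝ] X)) : Prop :=
  ∀ ε > 0, ∀ n : ℕ, ∀ x : Fin (k * n) → X, LinearIndependent ℝ x →
    ∀ y : Fin n → X, ∃ j : Fin n → Fin (k * n), ∃ T ∈ A,
      ∀ i, ‖y i - T (x (j i))‖ < ε

/-- `T` lies in the closure of `A` in the strong operator topology. -/
def InSOTClosure (A : Set (X →L[ℝ] X)) (T : X →L[ℝ] X) : Prop :=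
  ∀ ε > 0, ∀ s : Finset X, ∃ S ∈ A, ∀ x ∈ s, ‖S x - T x‖ < ε

/-- Closure of `A` in the strong operator topology. -/
def SOTcl (A : Set (X →L[ℝ] X)) : Set (X →L[ℝ] X) := {T | InSOTClosure A T}

/-- `A` is closed in the strong operator topology. -/
def SOTClosed (A : Set (X →L[ℝ] X)) : Prop :=
  ∀ T : X →L[ℝ] X, InSOTClosure A T → T ∈ A

/-- A Lomonosov set: transitive, SOT-closed, containing a nonzero compact operator. -/
def IsLomonosov (A : Set (X →L[ℝ] X)) : Prop :=
  IsTransitiveAlg A ∧ SOTClosed A ∧ ∃ T ∈ A, T ≠ 0 ∧ IsCompactOperator (⇑T)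

/-- Similarity of operator algebras. -/
def SimilarAlg (A B : Set (X →L[ℝ] X)) : Prop :=
  ∃ T : X ≃L[ℝ] X,
    (fun S => (T : X →L[ℝ] X).comp (S.comp ((T.symm : X →L[ℝ] X)))) '' A = B

/-- A partial complex structure: a densely defined operator `S` with `S ∘ S = -1`
(equivalently `S⁻¹ = -S`) mapping its domain onto itself. -/
structure PCS (X : Type*) [NormedAddCommGroup X] [NormedSpace ℝ X] where
  domain : Submodule ℝ X
  dense' : Dense (domain : Set X)
  map : domain →ₗ[ℝ] domain
  anti : ∀ x : domain, map (map x) = -x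

/-- A PCS is closed if its graph is closed in `X × X`. -/
def PCSClosed (S : PCS X) : Prop :=
  IsClosed (Set.range fun x : S.domain => ((x : X), (S.map x : X)))

/-- The algebra `𝒜_S` of all bounded operators leaving `D(S)` invariant and
commuting with `S` on `D(S)`. -/
def AlgS (S : PCS X) : Set (X →L[ℝ] X) :=
  {T | ∀ x : S.domain, ∃ y : S.domain, (y : X) = T x ∧ T (S.map x : X) = (S.map y : X)}

/-- A representation of the quaternion group `G_ℍ` by linear bijections of a dense
subspace of `X`, with `π(1) = id` and `π(-1) = -id`. -/
structure QRep (X : Type*) [NormedAddCommGroup X] [NormedSpace ℝ X] where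
  domain : Submodule ℝ X
  dense' : Dense (domain : Set X)
  pi : QuaternionGroup 2 → Module.End ℝ domain
  pi_one : pi 1 = 1
  pi_mul : ∀ g h, pi (g * h) = pi g * pi h
  pi_neg_one : pi (QuaternionGroup.a 2) = -1

/-- The representation is closed. -/
def QRepClosed (ρ : QRep X) : Prop :=
  ∀ (x : ℕ → ρ.domain) (w : QuaternionGroup 2 → X),
    (∀ g, Tendsto (fun n => (ρ.pi g (x n) : X)) atTop (𝓝 (w g))) →
    ∃ z : ρ.domain, ∀ g, w g = (ρ.pi g z : X)

/-- The representation is regular: the functionals bounded on the orbit of the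
representation are weak*-dense in the dual. -/
def QRepRegular (ρ : QRep X) : Prop :=
  Dense ((StrongDual.toWeakDual) ''
    {f : StrongDual ℝ X |
      ∃ C > 0, ∀ g : QuaternionGroup 2, ∀ x : ρ.domain, |f (ρ.pi g x : X)| ≤ C * ‖(x : X)‖})

/-- The algebra `𝒜_π`. -/
def AlgPi (ρ : QRep X) : Set (X →L[ℝ] X) :=
  {T | ∀ x : ρ.domain, ∃ y : ρ.domain, (y : X) = T x ∧
    ∀ g : QuaternionGroup 2, T (ρ.pi g x : X) = (ρ.pi g y : X)}


/-!
Since `𝔻 ≅ ℂ`, there is `J ∈ 𝔻` with `J ∘ J = -1` on `X^F`. It commutes with every `T ∈ 𝒜`, not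
only with `𝒜^F`: `T J - J T` is killed by the ideal `𝒜^F`, and a vector killed by `𝒜^F` is zero
by transitivity. So the graph of `J` is invariant under `T × T` and under `(x, y) ↦ (y, -x)`,
and so is its closure. The closure is again a graph: for a nonzero finite-rank `T₀ ∈ 𝒜`,
`T₀ J = J T₀` agrees with a bounded operator `K`, so `T₀ y = K x` on the closure; a point `(0, y)`
then gives `T₀ T y = 0` for all `T ∈ 𝒜`, whence `y = 0`. The closed operator with this graph is
the required partial complex structure.
-/

namespace FiniteRank

lemma mul_right {T : X →L[ℝ] X} (hT : FiniteRank T) (S : X →L[ℝ] X) :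
    FiniteRank (T * S) := by
  have : FiniteDimensional ℝ (LinearMap.range (T : X →ₗ[ℝ] X)) := hT
  exact Submodule.finiteDimensional_of_le
    (LinearMap.range_comp_le_range (S : X →ₗ[ℝ] X) (T : X →ₗ[ℝ] X))

lemma mul_left (S : X →L[ℝ] X) {T : X →L[ℝ] X} (hT : FiniteRank T) :
    FiniteRank (S * T) := by
  have : FiniteDimensional ℝ (LinearMap.range (T : X →ₗ[ℝ] X)) := hT
  show FiniteDimensional ℝ (LinearMap.range ((S : X →ₗ[ℝ] X) ∘ₗ (T : X →ₗ[ℝ] X)))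
  rw [LinearMap.range_comp]
  infer_instance

end FiniteRank

namespace IsTransitiveAlg

variable {A : Set (X →L[ℝ] X)} (hA : IsTransitiveAlg A)
include hA

lemma exists_apply_mem_open {x : X} (hx : x ≠ 0) {U : Set X} (hU : IsOpen U) (hne : U.Nonempty) :
    ∃ T ∈ A, T x ∈ U := by
  obtain ⟨y, hy⟩ := hne
  obtain ⟨ε, hε, hball⟩ := Metric.isOpen_iff.mp hU y hy
  obtain ⟨T, hT, hTx⟩ := hA x hx y ε hε
  exact ⟨T, hT, hball (by rwa [Metric.mem_ball, dist_eq_norm])⟩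

lemma exists_apply_ne_zero {x : X} (hx : x ≠ 0) {L : X →L[ℝ] X} (hL : L ≠ 0) :
    ∃ T ∈ A, L (T x) ≠ 0 :=
  hA.exists_apply_mem_open hx (isOpen_ne_fun L.continuous continuous_const)
    (ContinuousLinearMap.exists_ne_zero hL)

lemma snd_eq_zero_of_zero_mem {G : Set (X × X)}
    (hGA : ∀ T ∈ A, ∀ p ∈ G, T.prodMap T p ∈ G) {L K : X →L[ℝ] X} (hL : L ≠ 0)
    (hLK : ∀ p ∈ G, L p.2 = K p.1) {y : X} (hy : ((0 : X), y) ∈ G) : y = 0 := by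
  by_contra hy0
  obtain ⟨T, hT, hLT⟩ := hA.exists_apply_ne_zero hy0 hL
  exact hLT (by simpa using hLK _ (hGA T hT _ hy))

end IsTransitiveAlg

section LAlgebra

variable {A : NonUnitalSubalgebra ℝ (X →L[ℝ] X)}

lemma mul_mem_AF {T S : X →L[ℝ] X} (hT : T ∈ A) (hS : S ∈ AF A) : T * S ∈ AF A :=
  ⟨mul_mem hT hS.1, hS.2.mul_left T⟩

lemma AF_mul_mem {S T : X →L[ℝ] X} (hS : S ∈ AF A) (hT : T ∈ A) : S * T ∈ AF A :=
  ⟨mul_mem hS.1 hT, hS.2.mul_right T⟩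

lemma apply_mem_XF {T : X →L[ℝ] X} (hT : T ∈ A) {w : X} (hw : w ∈ XF A) : T w ∈ XF A := by
  suffices XF A ≤ (XF A).comap (T : X →ₗ[ℝ] X) from this hw
  refine Submodule.span_le.mpr ?_
  rintro _ ⟨S, hS, x, rfl⟩
  exact Submodule.subset_span ⟨T * S, mul_mem_AF hT hS, x, rfl⟩

lemma range_le_XF {S : X →L[ℝ] X} (hS : S ∈ AF A) :
    LinearMap.range (S : X →ₗ[ℝ] X) ≤ XF A := by
  rintro _ ⟨x, rfl⟩
  exact Submodule.subset_span ⟨S, hS, x, rfl⟩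

variable (hA : IsLSet (A : Set (X →L[ℝ] X)))
include hA

lemma IsLSet.dense_XF : Dense (XF (A : Set (X →L[ℝ] X)) : Set X) := by
  obtain ⟨htrans, T0, hT0, hT0ne, hT0fr⟩ := hA
  obtain ⟨x, hx⟩ := ContinuousLinearMap.exists_ne_zero hT0ne
  refine dense_iff_inter_open.mpr fun U hU hne => ?_
  obtain ⟨T, hT, hTU⟩ := htrans.exists_apply_mem_open hx hU hne
  exact ⟨T (T0 x), hTU, apply_mem_XF hT (range_le_XF ⟨hT0, hT0fr⟩ ⟨x, rfl⟩)⟩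

lemma IsLSet.eq_zero_of_forall_AF_apply_eq_zero {u : X} (hu : ∀ S ∈ AF A, S u = 0) :
    u = 0 := by
  obtain ⟨htrans, T0, hT0, hT0ne, hT0fr⟩ := hA
  by_contra hu0
  obtain ⟨T, hT, hT0T⟩ := htrans.exists_apply_ne_zero hu0 hT0ne
  exact hT0T (hu _ (AF_mul_mem ⟨hT0, hT0fr⟩ hT))

end LAlgebra

lemma Subalgebra.exists_mul_self_eq_neg_one {R : Type*} [Ring R] [Algebra ℝ R]
    {D : Subalgebra ℝ R} (e : D ≃ₐ[ℝ] ℂ) : ∃ J ∈ D, J * J = -1 := by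
  refine ⟨e.symm Complex.I, (e.symm Complex.I).2, ?_⟩
  have h : e.symm Complex.I * e.symm Complex.I = -1 := by
    rw [← map_mul, Complex.I_mul_I, map_neg, map_one]
  simpa using congrArg Subtype.val h

section DD

variable {A : NonUnitalSubalgebra ℝ (X →L[ℝ] X)}
  {J : Module.End ℝ (XF (A : Set (X →L[ℝ] X)))}

lemma ComplexType.exists_mem_DD_apply_apply_eq_neg (hC : ComplexType (A : Set (X →L[ℝ] X))) :
    ∃ J ∈ DD (A : Set (X →L[ℝ] X)), ∀ v, J (J v) = -v := by
  obtain ⟨J, hJ, hJJ⟩ := Subalgebra.exists_mul_self_eq_neg_one hC.some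
  exact ⟨J, hJ, fun v => by simpa using LinearMap.congr_fun hJJ v⟩

lemma DD.apply_comm_of_mem_AF (hJ : J ∈ DD (A : Set (X →L[ℝ] X))) {S : X →L[ℝ] X}
    (hS : S ∈ AF A) (v : XF (A : Set (X →L[ℝ] X))) :
    S (J v) = J ⟨S v, apply_mem_XF hS.1 v.2⟩ :=
  congrArg Subtype.val
    (LinearMap.congr_fun ((Subalgebra.mem_centralizer_iff ℝ).mp hJ _ ⟨S, hS, rfl⟩) v)

lemma DD.apply_comm (hA : IsLSet (A : Set (X →L[ℝ] X)))
    (hJ : J ∈ DD (A : Set (X →L[ℝ] X))) {T : X →L[ℝ] X} (hT : T ∈ A)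
    (w : XF (A : Set (X →L[ℝ] X))) :
    T (J w) = J ⟨T w, apply_mem_XF hT w.2⟩ := by
  refine sub_eq_zero.mp (hA.eq_zero_of_forall_AF_apply_eq_zero fun S hS => ?_)
  rw [map_sub, sub_eq_zero]
  exact (DD.apply_comm_of_mem_AF hJ (AF_mul_mem hS hT) w).trans
    (DD.apply_comm_of_mem_AF hJ hS ⟨T w, apply_mem_XF hT w.2⟩).symm

/-- `J` need not be continuous, but `S ∘ J = J ∘ S` is, since `J` is continuous on the
finite-dimensional range of `S`. -/
lemma DD.exists_clm_eq_comp (hJ : J ∈ DD (A : Set (X →L[ℝ] X))) {S : X →L[ℝ] X}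
    (hS : S ∈ AF A) :
    ∃ K : X →L[ℝ] X, ∀ w : XF (A : Set (X →L[ℝ] X)), S (J w) = K w := by
  have : FiniteDimensional ℝ (LinearMap.range (S : X →ₗ[ℝ] X)) := hS.2
  let JS : LinearMap.range (S : X →ₗ[ℝ] X) →ₗ[ℝ] X :=
    (XF (A : Set (X →L[ℝ] X))).subtype ∘ₗ J ∘ₗ Submodule.inclusion (range_le_XF hS)
  let S' : X →L[ℝ] LinearMap.range (S : X →ₗ[ℝ] X) :=
    S.codRestrict _ (LinearMap.mem_range_self (S : X →ₗ[ℝ] X))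
  let JS' : LinearMap.range (S : X →ₗ[ℝ] X) →L[ℝ] X := LinearMap.toContinuousLinearMap JS
  exact ⟨JS' ∘L S', DD.apply_comm_of_mem_AF hJ hS⟩

end DD

namespace LinearPMap

variable {R E : Type*} [AddCommGroup E]

lemma graph_mem_invtSubmodule_iff [Ring R] [Module R E] {f : E →ₗ.[R] E}
    {Φ : Module.End R (E × E)} :
    f.graph ∈ Φ.invtSubmodule ↔ ∀ x : f.domain, Φ ((x : E), f x) ∈ f.graph := by
  refine ⟨fun h x => h (f.mem_graph x), fun h p hp => ?_⟩
  obtain ⟨x, rfl⟩ := f.mem_graph_iff'.mp hp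
  exact h x

lemma IsClosable.graph_closure_mem_invtSubmodule [CommRing R] [Module R E] [TopologicalSpace R]
    [TopologicalSpace E] [ContinuousAdd E] [ContinuousSMul R E] {f : E →ₗ.[R] E}
    (hf : f.IsClosable) {Φ : (E × E) →L[R] (E × E)}
    (h : f.graph ∈ Module.End.invtSubmodule (Φ : Module.End R (E × E))) :
    f.closure.graph ∈ Module.End.invtSubmodule (Φ : Module.End R (E × E)) := by
  rw [← hf.graph_closure_eq_closure_graph]
  exact Submodule.topologicalClosure_mem_invtSubmodule h

end LinearPMap

variable (X) in
/-- The quarter turn `(x, y) ↦ (y, -x)`: the graph of a partial map `S` is invariant under it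
exactly when `S` maps its domain into itself with `S (S x) = -x`. -/
def quarterTurn : (X × X) →L[ℝ] (X × X) :=
  (ContinuousLinearMap.snd ℝ X X).prod (-ContinuousLinearMap.fst ℝ X X)

namespace LinearPMap

variable (S : X →ₗ.[ℝ] X)

def toPCS (hdense : Dense (S.domain : Set X))
    (hS : S.graph ∈ Module.End.invtSubmodule (quarterTurn X : Module.End ℝ (X × X))) :
    PCS X where
  domain := S.domain
  dense' := hdense
  map := LinearMap.codRestrict S.domain S.toFun fun x =>
    mem_domain_of_mem_graph (hS (S.mem_graph x))
  anti x := Subtype.ext ((image_iff _).mpr (hS (S.mem_graph x))).symm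

variable {S} {hdense : Dense (S.domain : Set X)}
  {hS : S.graph ∈ Module.End.invtSubmodule (quarterTurn X : Module.End ℝ (X × X))}

lemma IsClosed.pcsClosed_toPCS (hclosed : S.IsClosed) : PCSClosed (S.toPCS hdense hS) := by
  have hrange : Set.range (fun x : S.domain => ((x : X), S x)) = S.graph :=
    Set.ext fun _ => S.mem_graph_iff'.symm
  show _root_.IsClosed (Set.range fun x : S.domain => ((x : X), S x))
  rwa [hrange]

lemma mem_algS_toPCS {T : X →L[ℝ] X}
    (hT : S.graph ∈ Module.End.invtSubmodule (T.prodMap T : Module.End ℝ (X × X))) :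
    T ∈ AlgS (S.toPCS hdense hS) := fun x =>
  have hx : (T x, T (S x)) ∈ S.graph := hT (S.mem_graph x)
  ⟨⟨T x, mem_domain_of_mem_graph hx⟩, rfl, (image_iff _).mpr hx⟩

end LinearPMap

def Module.End.toLinearPMap {V : Submodule ℝ X} (J : Module.End ℝ V) : X →ₗ.[ℝ] X :=
  ⟨V, V.subtype ∘ₗ J⟩

section ComplexStructure

variable {A : NonUnitalSubalgebra ℝ (X →L[ℝ] X)}
  {J : Module.End ℝ (XF (A : Set (X →L[ℝ] X)))}

lemma graph_toLinearPMap_mem_invtSubmodule_quarterTurn (hJJ : ∀ v, J (J v) = -v) :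
    J.toLinearPMap.graph ∈ Module.End.invtSubmodule (quarterTurn X : Module.End ℝ (X × X)) :=
  LinearPMap.graph_mem_invtSubmodule_iff.mpr fun w =>
    J.toLinearPMap.mem_graph_iff.mpr ⟨J w, rfl, congrArg Subtype.val (hJJ w)⟩

variable (hA : IsLSet (A : Set (X →L[ℝ] X))) (hJ : J ∈ DD (A : Set (X →L[ℝ] X)))
include hA hJ

lemma graph_toLinearPMap_mem_invtSubmodule_prodMap {T : X →L[ℝ] X} (hT : T ∈ A) :
    J.toLinearPMap.graph ∈ Module.End.invtSubmodule (T.prodMap T : Module.End ℝ (X × X)) :=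
  LinearPMap.graph_mem_invtSubmodule_iff.mpr fun w =>
    J.toLinearPMap.mem_graph_iff.mpr
      ⟨⟨T w, apply_mem_XF hT w.2⟩, rfl, (DD.apply_comm hA hJ hT w).symm⟩

lemma isClosable_toLinearPMap : J.toLinearPMap.IsClosable := by
  obtain ⟨T0, hT0, hT0ne, hT0fr⟩ := hA.2
  obtain ⟨K, hK⟩ := DD.exists_clm_eq_comp hJ ⟨hT0, hT0fr⟩
  set G := J.toLinearPMap.graph.topologicalClosure
  have hGA : ∀ T ∈ A, ∀ p ∈ (G : Set (X × X)), T.prodMap T p ∈ G :=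
    fun T hT => Submodule.topologicalClosure_mem_invtSubmodule
      (graph_toLinearPMap_mem_invtSubmodule_prodMap hA hJ hT)
  have hT0K : ∀ p ∈ (G : Set (X × X)), T0 p.2 = K p.1 := by
    rw [Submodule.topologicalClosure_coe]
    refine closure_minimal (fun q hq => ?_) (isClosed_eq (by fun_prop) (by fun_prop))
    obtain ⟨w, rfl⟩ := J.toLinearPMap.mem_graph_iff'.mp hq
    exact hK w
  refine ⟨G.toLinearPMap, (Submodule.toLinearPMap_graph_eq G fun p hp hp1 => ?_).symm⟩
  exact hA.1.snd_eq_zero_of_zero_mem hGA hT0ne hT0K (hp1 ▸ hp)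

end ComplexStructure

theorem stmt13_general {X : Type*} [NormedAddCommGroup X] [NormedSpace ℝ X]
    (A : NonUnitalSubalgebra ℝ (X →L[ℝ] X))
    (hA : IsLSet (A : Set (X →L[ℝ] X)))
    (hC : ComplexType (A : Set (X →L[ℝ] X))) :
    ∃ S : PCS X, PCSClosed S ∧ (A : Set (X →L[ℝ] X)) ⊆ AlgS S := by
  obtain ⟨J, hJ, hJJ⟩ := hC.exists_mem_DD_apply_apply_eq_neg
  have hclosable := isClosable_toLinearPMap hA hJ
  have hdense := hA.dense_XF.mono J.toLinearPMap.le_closure.1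
  have hrot := hclosable.graph_closure_mem_invtSubmodule
    (graph_toLinearPMap_mem_invtSubmodule_quarterTurn hJJ)
  refine ⟨J.toLinearPMap.closure.toPCS hdense hrot,
    hclosable.closure_isClosed.pcsClosed_toPCS, fun T hT => ?_⟩
  exact LinearPMap.mem_algS_toPCS <| hclosable.graph_closure_mem_invtSubmodule
    (graph_toLinearPMap_mem_invtSubmodule_prodMap hA hJ hT)

/-- Every L-algebra of complex type is contained in `𝒜_S` for some closed
partial complex structure `S`. -/
theorem stmt13 {X : Type*} [NormedAddCommGroup X] [NormedSpace ℝ X] [CompleteSpace X]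
    (hinf : ¬ FiniteDimensional ℝ X)
    (A : NonUnitalSubalgebra ℝ (X →L[ℝ] X))
    (hA : IsLSet (A : Set (X →L[ℝ] X)))
    (hC : ComplexType (A : Set (X →L[ℝ] X))) :
    ∃ S : PCS X, PCSClosed S ∧ (A : Set (X →L[ℝ] X)) ⊆ AlgS S :=
  stmt13_general A hA hC
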